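/- Let D be a finite nonempty set and I = (V, {R_u}_{u∈V}, {R_{u,v}}_{u≠v∈V}) a nontrivial binary (2,3)-minimal instance over D such that every binary relation R_{u,v} is preserved by the dual discriminator on D, and let cost : V × D → ℝ≥0. Let p : V × D → ℝ satisfy: p(v,a) ≥ 0 for all (v,a); ∑_{a∈D} p(v,a) = 1 for all v ∈ V; p(v,a) = 0 whenever a ∉ R_v; and for all distinct u,v ∈ V there exists q : D × D → ℝ with q(a,b) ≥ 0 for all (a,b), q(a,b) = 0 whenever (a,b) ∉ R_{u,v}, ∑_{b∈D} q(a,b) = p(u,a) for all a ∈ D, and ∑_{a∈D} q(a,b) = p(v,b) for all b ∈ D. Then there exists a satisfying assignment A : V → D for I with ∑_{v∈V} cost(v, A(v)) ≤ |D| · ∑_{v∈V} ∑_{a∈D} p(v,a) · cost(v,a). -/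
import Mathlib


/-- The dual discriminator: outputs `a` if at least two of the arguments equal `a`,
and the first argument if the arguments are pairwise distinct. -/
def dualDisc {D : Type*} [DecidableEq D] (x y z : D) : D :=
  if x = y then x else if x = z then x else if y = z then y else x

/-- A ternary operation `f` on `D` preserves a binary relation `R ⊆ D²`. -/
def Preserves3 {D : Type*} (f : D → D → D → D) (R : Set (D × D)) : Prop :=
  ∀ p q r : D × D, p ∈ R → q ∈ R → r ∈ R → (f p.1 q.1 r.1, f p.2 q.2 r.2) ∈ R

/-- A binary instance `(V, {R_u}, {R_{u,v}})` is (2,3)-minimal. -/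
def Minimal23 {V D : Type*} (Ru : V → Set D) (Rp : V → V → Set (D × D)) : Prop :=
  (∀ u v : V, u ≠ v → ∀ a b : D, (a, b) ∈ Rp u v ↔ (b, a) ∈ Rp v u) ∧
  (∀ u v : V, u ≠ v → ∀ a : D, a ∈ Ru u ↔ ∃ b : D, (a, b) ∈ Rp u v) ∧
  (∀ u v w : V, u ≠ v → u ≠ w → v ≠ w → ∀ a b : D, (a, b) ∈ Rp u v →
    ∃ c ∈ Ru w, (a, c) ∈ Rp u w ∧ (b, c) ∈ Rp v w)

lemma dualDisc_right_ne {D : Type*} [DecidableEq D] {y z : D} (x : D) (h : y ≠ z) :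
    dualDisc x y z = x := by
  unfold dualDisc; split_ifs <;> simp_all

lemma dualDisc_pair {D : Type*} [DecidableEq D] (x a : D) : dualDisc x a a = a := by
  unfold dualDisc; split_ifs <;> simp_all

/-- given a feasible basic-LP solution `p` of a nontrivial (2,3)-minimal
instance preserved by the dual discriminator, there is a satisfying assignment of cost at
most `|D|` times the LP value. -/
theorem stmt9 {V D : Type*} [Fintype V] [Fintype D] [DecidableEq D] [Nonempty D]
    (Ru : V → Set D) (Rp : V → V → Set (D × D))
    (hmin : Minimal23 Ru Rp)
    (hnontriv : ∀ u : V, (Ru u).Nonempty)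
    (hdd : ∀ u v : V, u ≠ v → Preserves3 dualDisc (Rp u v))
    (cost : V → D → ℝ) (hcost : ∀ v a, 0 ≤ cost v a)
    (p : V → D → ℝ)
    (hp0 : ∀ v a, 0 ≤ p v a)
    (hp1 : ∀ v : V, ∑ a : D, p v a = 1)
    (hpR : ∀ v a, a ∉ Ru v → p v a = 0)
    (hq : ∀ u v : V, u ≠ v → ∃ q : D → D → ℝ,
      (∀ a b, 0 ≤ q a b) ∧ (∀ a b, (a, b) ∉ Rp u v → q a b = 0) ∧
      (∀ a : D, ∑ b : D, q a b = p u a) ∧ (∀ b : D, ∑ a : D, q a b = p v b)) :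
    ∃ A : V → D, ((∀ u, A u ∈ Ru u) ∧ ∀ u v : V, u ≠ v → (A u, A v) ∈ Rp u v) ∧
      ∑ v : V, cost v (A v) ≤
        (Fintype.card D : ℝ) * ∑ v : V, ∑ a : D, p v a * cost v a := by
  classical
  obtain ⟨hsym, hproj, htri⟩ := hmin
  set n : ℝ := (Fintype.card D : ℝ) with hn
  have hnpos : 0 < n := by
    simp only [hn, Nat.cast_pos]
    exact Fintype.card_pos
  -- Lemma A : rows of the constraint relations are singletons or everything
  have lemA : ∀ u w : V, u ≠ w → ∀ a c₁ c₂ c₃ : D, (a, c₁) ∈ Rp u w → (a, c₂) ∈ Rp u w →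
      c₁ ≠ c₂ → c₃ ∈ Ru w → (a, c₃) ∈ Rp u w := by
    intro u w huw a c₁ c₂ c₃ h1 h2 h12 h3
    obtain ⟨a₃, ha₃⟩ := (hproj w u (Ne.symm huw) c₃).mp h3
    have ha₃' : (a₃, c₃) ∈ Rp u w := (hsym w u (Ne.symm huw) c₃ a₃).mp ha₃
    have hkey := hdd u w huw (a₃, c₃) (a, c₁) (a, c₂) ha₃' h1 h2
    simpa [dualDisc_pair, dualDisc_right_ne _ h12] using hkey
  -- existence of a value with probability at least 1/n
  have hex : ∀ w : V, ∃ c : D, 1 / n ≤ p w c := by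
    intro w
    by_contra h
    push_neg at h
    have hlt : ∑ a : D, p w a < ∑ _a : D, 1 / n :=
      Finset.sum_lt_sum_of_nonempty Finset.univ_nonempty (fun a _ => h a)
    rw [hp1 w, Finset.sum_const, Finset.card_univ, nsmul_eq_mul, ← hn] at hlt
    rw [mul_one_div, div_self (ne_of_gt hnpos)] at hlt
    exact lt_irrefl 1 hlt
  have memRu : ∀ (w : V) (c : D), 1 / n ≤ p w c → c ∈ Ru w := by
    intro w c hc
    by_contra h
    rw [hpR w c h] at hc
    have : (0:ℝ) < 1 / n := by positivity
    linarith
  -- main induction: partial satisfying assignments with high LP weight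
  have main : ∀ T : Finset V, ∃ A : V → D, (∀ u ∈ T, 1 / n ≤ p u (A u)) ∧
      (∀ u ∈ T, ∀ v ∈ T, u ≠ v → (A u, A v) ∈ Rp u v) := by
    intro T
    induction T using Finset.induction_on with
    | empty => exact ⟨fun _ => Classical.arbitrary D, by simp, by simp⟩
    | @insert w T hw ih =>
      obtain ⟨A, hA1, hA2⟩ := ih
      have hARu : ∀ u ∈ T, A u ∈ Ru u := fun u hu => memRu u (A u) (hA1 u hu)
      -- find a suitable value c for w
      have hfind : ∃ c : D, 1 / n ≤ p w c ∧ ∀ u ∈ T, (A u, c) ∈ Rp u w := by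
        by_cases hsing : ∃ u ∈ T, ∃ c : D, (A u, c) ∈ Rp u w ∧
            ∀ c', (A u, c') ∈ Rp u w → c' = c
        · obtain ⟨u, huT, c, hc, hcu⟩ := hsing
          have huw : u ≠ w := ne_of_mem_of_not_mem huT hw
          obtain ⟨q, hq0, hqR, hqrow, hqcol⟩ := hq u w huw
          have h1 : p u (A u) = q (A u) c := by
            rw [← hqrow (A u)]
            apply Finset.sum_eq_single c
            · intro b _ hb
              exact hqR (A u) b (fun hmem => hb (hcu b hmem))
            · intro h
              exact absurd (Finset.mem_univ c) h
          have h2 : q (A u) c ≤ p w c := by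
            rw [← hqcol c]
            exact Finset.single_le_sum (fun a _ => hq0 a c) (Finset.mem_univ _)
          refine ⟨c, by linarith [hA1 u huT], ?_⟩
          intro u' hu'
          by_cases h : u' = u
          · subst h; exact hc
          · have hu'w : u' ≠ w := ne_of_mem_of_not_mem hu' hw
            obtain ⟨e, heR, he1, he2⟩ := htri u u' w (fun h' => h h'.symm) huw hu'w
              (A u) (A u') (hA2 u huT u' hu' (fun h' => h h'.symm))
            rwa [hcu e he1] at he2
        · push_neg at hsing
          obtain ⟨c, hc⟩ := hex w
          have hcR : c ∈ Ru w := memRu w c hc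
          refine ⟨c, hc, fun u' hu' => ?_⟩
          have hu'w : u' ≠ w := ne_of_mem_of_not_mem hu' hw
          obtain ⟨b, hb⟩ := (hproj u' w hu'w (A u')).mp (hARu u' hu')
          obtain ⟨b', hb', hbb'⟩ := hsing u' hu' b hb
          exact lemA u' w hu'w (A u') b' b c hb' hb hbb' hcR
      obtain ⟨c, hc1, hc2⟩ := hfind
      refine ⟨Function.update A w c, ?_, ?_⟩
      · intro u hu
        rcases Finset.mem_insert.mp hu with h | h
        · subst h; rwa [Function.update_self]
        · rw [Function.update_of_ne (ne_of_mem_of_not_mem h hw)]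
          exact hA1 u h
      · intro u hu v hv huv
        rcases Finset.mem_insert.mp hu with h | h
        · subst h
          rcases Finset.mem_insert.mp hv with h' | h'
          · exact absurd h'.symm huv
          · rw [Function.update_self, Function.update_of_ne (ne_of_mem_of_not_mem h' hw)]
            exact (hsym v u (fun h'' => huv h''.symm) (A v) c).mp (hc2 v h')
        · rw [Function.update_of_ne (ne_of_mem_of_not_mem h hw)]
          rcases Finset.mem_insert.mp hv with h' | h'
          · subst h'
            rw [Function.update_self]
            exact hc2 u h
          · rw [Function.update_of_ne (ne_of_mem_of_not_mem h' hw)]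
            exact hA2 u h v h' huv
  obtain ⟨A, hA1, hA2⟩ := main Finset.univ
  have hA1' : ∀ v : V, 1 / n ≤ p v (A v) := fun v => hA1 v (Finset.mem_univ v)
  refine ⟨A, ⟨fun u => memRu u (A u) (hA1' u),
    fun u v huv => hA2 u (Finset.mem_univ u) v (Finset.mem_univ v) huv⟩, ?_⟩
  have key : ∀ v : V, cost v (A v) ≤ n * ∑ a : D, p v a * cost v a := by
    intro v
    have h1 : p v (A v) * cost v (A v) ≤ ∑ a : D, p v a * cost v a :=
      Finset.single_le_sum (fun a _ => mul_nonneg (hp0 v a) (hcost v a)) (Finset.mem_univ _)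
    have h2 : 1 / n * cost v (A v) ≤ p v (A v) * cost v (A v) :=
      mul_le_mul_of_nonneg_right (hA1' v) (hcost v (A v))
    calc cost v (A v) = n * (1 / n * cost v (A v)) := by field_simp
      _ ≤ n * ∑ a : D, p v a * cost v a :=
        mul_le_mul_of_nonneg_left (le_trans h2 h1) hnpos.le
  calc ∑ v : V, cost v (A v) ≤ ∑ v : V, n * ∑ a : D, p v a * cost v a :=
        Finset.sum_le_sum (fun v _ => key v)
    _ = n * ∑ v : V, ∑ a : D, p v a * cost v a := by rw [Finset.mul_sum]
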